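/- Let (A,·,α) be a Hom-pre-Lie algebra, and let (V, β_V, ρ_V, μ_V) and (W, β_W, ρ_W, μ_W) be representations of (A,·,α). Then (V ⊗ W, β_V ⊗ β_W, ρ_V ⊗ β_W + β_V ⊗ (ρ_W − μ_W), μ_V ⊗ β_W) is a representation of (A,·,α), where for linear maps f : V → V and g : W → W, f ⊗ g denotes the induced map on V ⊗ W, and (ρ_V ⊗ β_W + β_V ⊗ (ρ_W − μ_W))(x) := ρ_V(x) ⊗ β_W + β_V ⊗ (ρ_W(x) − μ_W(x)) and (μ_V ⊗ β_W)(x) := μ_V(x) ⊗ β_W. -/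
import Mathlib


/-- A Hom-pre-Lie algebra structure on `A`: a bilinear product and an algebra
morphism `α` satisfying the Hom-pre-Lie identity. -/
def IsHomPreLie {K A : Type*} [Field K] [AddCommGroup A] [Module K A]
    (mul : A →ₗ[K] A →ₗ[K] A) (α : A →ₗ[K] A) : Prop :=
  (∀ x y, α (mul x y) = mul (α x) (α y)) ∧
  (∀ x y z, mul (mul x y) (α z) - mul (α x) (mul y z)
      = mul (mul y x) (α z) - mul (α y) (mul x z))

/-- A representation of a Hom-Lie algebra `(L, bracket, α)` on `V` with respect to `β`. -/
def IsHomLieRep {K L V : Type*} [Field K] [AddCommGroup L] [Module K L]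
    [AddCommGroup V] [Module K V]
    (bracket : L →ₗ[K] L →ₗ[K] L) (α : L →ₗ[K] L)
    (β : V →ₗ[K] V) (ρ : L →ₗ[K] Module.End K V) : Prop :=
  (∀ x, ρ (α x) ∘ₗ β = β ∘ₗ ρ x) ∧
  (∀ x y, ρ (bracket x y) ∘ₗ β = ρ (α x) ∘ₗ ρ y - ρ (α y) ∘ₗ ρ x)

/-- A representation `(V, β, ρ, μ)` of a Hom-pre-Lie algebra `(A, mul, α)`:
`ρ` is a representation of the sub-adjacent Hom-Lie algebra (whose bracket is the
commutator `mul - mul.flip`) with respect to `β`, together with the two compatibility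
conditions for `μ`. -/
def IsHomPreLieRep {K A V : Type*} [Field K] [AddCommGroup A] [Module K A]
    [AddCommGroup V] [Module K V]
    (mul : A →ₗ[K] A →ₗ[K] A) (α : A →ₗ[K] A)
    (β : V →ₗ[K] V) (ρ μ : A →ₗ[K] Module.End K V) : Prop :=
  IsHomLieRep (mul - mul.flip) α β ρ ∧
  (∀ x, β ∘ₗ μ x = μ (α x) ∘ₗ β) ∧
  (∀ x y, μ (α y) ∘ₗ μ x - μ (mul x y) ∘ₗ β = μ (α y) ∘ₗ ρ x - ρ (α x) ∘ₗ μ y)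

open TensorProduct in
/-- The linear map `x ↦ ρ_V(x) ⊗ β_W + β_V ⊗ (ρ_W(x) − μ_W(x))` on `V ⊗ W`. -/
noncomputable def tensorRho {K A V W : Type*} [Field K] [AddCommGroup A] [Module K A]
    [AddCommGroup V] [Module K V] [AddCommGroup W] [Module K W]
    (βV : V →ₗ[K] V) (βW : W →ₗ[K] W)
    (ρV μV : A →ₗ[K] Module.End K V) (ρW μW : A →ₗ[K] Module.End K W) :
    A →ₗ[K] Module.End K (V ⊗[K] W) where
  toFun x := TensorProduct.map (ρV x) βW + TensorProduct.map βV (ρW x - μW x)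
  map_add' x y := by
    ext v w
    simp [TensorProduct.map_tmul, TensorProduct.add_tmul, TensorProduct.tmul_add,
      TensorProduct.tmul_sub, TensorProduct.sub_tmul]
    abel
  map_smul' c x := by
    ext v w
    simp [TensorProduct.map_tmul, TensorProduct.tmul_add, TensorProduct.smul_tmul,
      TensorProduct.tmul_smul, TensorProduct.tmul_sub, smul_sub]

open TensorProduct in
/-- The linear map `x ↦ μ_V(x) ⊗ β_W` on `V ⊗ W`. -/
noncomputable def tensorMu {K A V W : Type*} [Field K] [AddCommGroup A] [Module K A]
    [AddCommGroup V] [Module K V] [AddCommGroup W] [Module K W]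
    (βW : W →ₗ[K] W) (μV : A →ₗ[K] Module.End K V) :
    A →ₗ[K] Module.End K (V ⊗[K] W) where
  toFun x := TensorProduct.map (μV x) βW
  map_add' x y := by
    ext v w
    simp [TensorProduct.map_tmul, TensorProduct.add_tmul]
  map_smul' c x := by
    ext v w
    simp [TensorProduct.map_tmul, TensorProduct.smul_tmul]


open TensorProduct in
lemma mapSubLeft {K V W P Q : Type*} [Field K] [AddCommGroup V] [Module K V]
    [AddCommGroup W] [Module K W] [AddCommGroup P] [Module K P]
    [AddCommGroup Q] [Module K Q]
    (f g : V →ₗ[K] P) (h : W →ₗ[K] Q) :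
    TensorProduct.map (f - g) h = TensorProduct.map f h - TensorProduct.map g h := by
  ext v w
  simp [TensorProduct.sub_tmul]

open TensorProduct in
lemma mapSubRight {K V W P Q : Type*} [Field K] [AddCommGroup V] [Module K V]
    [AddCommGroup W] [Module K W] [AddCommGroup P] [Module K P]
    [AddCommGroup Q] [Module K Q]
    (f : V →ₗ[K] P) (g h : W →ₗ[K] Q) :
    TensorProduct.map f (g - h) = TensorProduct.map f g - TensorProduct.map f h := by
  ext v w
  simp [TensorProduct.tmul_sub]

lemma tensorRho_apply {K A V W : Type*} [Field K] [AddCommGroup A] [Module K A]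
    [AddCommGroup V] [Module K V] [AddCommGroup W] [Module K W]
    (βV : V →ₗ[K] V) (βW : W →ₗ[K] W)
    (ρV μV : A →ₗ[K] Module.End K V) (ρW μW : A →ₗ[K] Module.End K W) (x : A) :
    tensorRho βV βW ρV μV ρW μW x
      = TensorProduct.map (ρV x) βW + TensorProduct.map βV (ρW x - μW x) := rfl

lemma tensorMu_apply {K A V W : Type*} [Field K] [AddCommGroup A] [Module K A]
    [AddCommGroup V] [Module K V] [AddCommGroup W] [Module K W]
    (βW : W →ₗ[K] W) (μV : A →ₗ[K] Module.End K V) (x : A) :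
    tensorMu βW μV x = TensorProduct.map (μV x) βW := rfl

open TensorProduct in
/-- Let `(A,·,α)` be a Hom-pre-Lie algebra and `(V,β_V,ρ_V,μ_V)`,
`(W,β_W,ρ_W,μ_W)` representations of it.  Then
`(V ⊗ W, β_V ⊗ β_W, ρ_V ⊗ β_W + β_V ⊗ (ρ_W − μ_W), μ_V ⊗ β_W)` is a representation
of `(A,·,α)`. -/
theorem tensor_rep_isHomPreLieRep
    {K A V W : Type*} [Field K] [AddCommGroup A] [Module K A]
    [AddCommGroup V] [Module K V] [AddCommGroup W] [Module K W]
    (mul : A →ₗ[K] A →ₗ[K] A) (α : A ≃ₗ[K] A)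
    (hA : IsHomPreLie mul (α : A →ₗ[K] A))
    (βV : V →ₗ[K] V) (ρV μV : A →ₗ[K] Module.End K V)
    (hV : IsHomPreLieRep mul (α : A →ₗ[K] A) βV ρV μV)
    (βW : W →ₗ[K] W) (ρW μW : A →ₗ[K] Module.End K W)
    (hW : IsHomPreLieRep mul (α : A →ₗ[K] A) βW ρW μW) :
    IsHomPreLieRep mul (α : A →ₗ[K] A)
      (TensorProduct.map βV βW)
      (tensorRho βV βW ρV μV ρW μW) (tensorMu βW μV) := by
  obtain ⟨⟨hρV1, hρV2⟩, hμV1, hμV2⟩ := hV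
  obtain ⟨⟨hρW1, hρW2⟩, hμW1, hμW2⟩ := hW
  have hb : ∀ x y : A, (mul - mul.flip) x y = mul x y - mul y x := by
    intro x y; simp [LinearMap.sub_apply]
  have hDW1 : ∀ x : A, (ρW ((α : A →ₗ[K] A) x) - μW ((α : A →ₗ[K] A) x)) ∘ₗ βW = βW ∘ₗ (ρW x - μW x) := by
    intro x
    rw [LinearMap.sub_comp, LinearMap.comp_sub, hρW1, hμW1]
  have hDW2 : ∀ x y : A,
      (ρW ((mul - mul.flip) x y) - μW ((mul - mul.flip) x y)) ∘ₗ βW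
        = (ρW ((α : A →ₗ[K] A) x) - μW ((α : A →ₗ[K] A) x)) ∘ₗ (ρW y - μW y)
          - (ρW ((α : A →ₗ[K] A) y) - μW ((α : A →ₗ[K] A) y)) ∘ₗ (ρW x - μW x) := by
    intro x y
    have e1 := hρW2 x y
    have e2 := hμW2 x y
    have e3 := hμW2 y x
    simp only [hb, map_sub] at e1 ⊢
    simp only [LinearMap.sub_comp, LinearMap.comp_sub] at e1 e2 e3 ⊢
    linear_combination (norm := abel1) e1 + e2 - e3
  refine ⟨⟨?_, ?_⟩, ?_, ?_⟩
  · intro x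
    simp only [tensorRho_apply, LinearMap.add_comp, LinearMap.comp_add, ← TensorProduct.map_comp]
    rw [hρV1, hDW1]
  · intro x y
    have e1 := hρV2 x y
    simp only [hb, map_sub] at e1 ⊢
    simp only [tensorRho_apply, mapSubLeft, mapSubRight,
      LinearMap.add_comp, LinearMap.comp_add, LinearMap.sub_comp, LinearMap.comp_sub,
      ← TensorProduct.map_comp]
    simp only [hρV1, hρW1, ← hμW1]
    have E1 := congrArg (fun f : Module.End K V => TensorProduct.map f (βW ∘ₗ βW)) e1
    have E2 := congrArg (fun g : Module.End K W => TensorProduct.map (βV ∘ₗ βV) g) (hDW2 x y)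
    simp only [hb, map_sub, LinearMap.sub_comp, LinearMap.comp_sub,
      mapSubLeft, mapSubRight] at E1 E2
    linear_combination (norm := abel1) E1 + E2
  · intro x
    simp only [tensorRho_apply, tensorMu_apply, ← TensorProduct.map_comp]
    rw [hμV1]
  · intro x y
    have e2 := hμV2 x y
    simp only [tensorRho_apply, tensorMu_apply, mapSubRight,
      LinearMap.add_comp, LinearMap.comp_add, LinearMap.sub_comp, LinearMap.comp_sub,
      ← TensorProduct.map_comp]
    simp only [hμV1, hρW1, ← hμW1]
    have E := congrArg (fun f : Module.End K V => TensorProduct.map f (βW ∘ₗ βW)) e2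
    simp only [LinearMap.sub_comp, mapSubLeft] at E
    linear_combination (norm := abel1) E
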